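/- arXiv:2304.03517 — 6 statements merged into one kernel-verified Lean document; each statement's English description precedes it below -/
import Mathlib

section
/- Let 0 < a ≤ 1 be real and m ≥ 0 an integer. Then the limit defining γ_H(m,a+1) exists and γ_H(m,a+1) = γ_H(m,a) − γ(m,a)/a, where γ_H(m,a) = lim_{x→∞} ( Σ_{0≤n≤x} H_n(a) log^m(n+a)/(n+a) − log^{m+2}(x+a)/(m+2) − γ(0,a)·log^{m+1}(x+a)/(m+1) ) and similarly for γ_H(m,a+1) with a replaced by a+1. -/
open Filter Finset MeasureTheory

/-- `Hgen a n = ∑_{k=0}^n 1/(k+a)`. -/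
noncomputable def Hgen (a : ℝ) (n : ℕ) : ℝ := ∑ k ∈ Finset.range (n + 1), 1 / ((k : ℝ) + a)

open Real Topology

/-! Since `H_{n+1}(a) = 1/a + H_n(a+1)`, shifting the summation index by one writes the
`γ_H(m,a+1)`-sum as the `γ_H(m,a)`-sum minus `1/a` times the `γ(m,a)`-sum, and likewise gives
`γ(0,a+1) = γ(0,a) - 1/a`. The only analytic input is that `log^p(x+a) - log^p(⌊x⌋+a) → 0`,
which turns the limit over integers defining `γ(m,a)` into a limit over real `x`. -/

lemma Hgen_zero (a : ℝ) : Hgen a 0 = 1 / a := by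
  simp [Hgen]

lemma Hgen_succ (a : ℝ) (n : ℕ) : Hgen a (n + 1) = 1 / a + Hgen (a + 1) n := by
  rw [Hgen, sum_range_succ', Hgen, add_comm]
  push_cast
  simp only [zero_add, add_assoc, add_comm (1 : ℝ)]

lemma sum_range_Hgen_add_one_mul (a : ℝ) (g : ℝ → ℝ) (N : ℕ) :
    ∑ n ∈ range (N + 1), Hgen (a + 1) n * g (n + (a + 1))
      = ∑ n ∈ range (N + 1 + 1), Hgen a n * g (n + a)
        - 1 / a * ∑ n ∈ range (N + 1 + 1), g (n + a) := by
  rw [sum_range_succ' _ (N + 1), sum_range_succ' (fun n : ℕ => g (n + a)) (N + 1), mul_add,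
    mul_sum, Hgen_zero, Nat.cast_zero, add_sub_add_right_eq_sub, ← sum_sub_distrib]
  refine sum_congr rfl fun n _ => ?_
  rw [Hgen_succ]
  push_cast
  ring_nf

lemma tendsto_Hgen_add_one_sub_log {a γ : ℝ}
    (h : Tendsto (fun N : ℕ => Hgen a N - log (N + a)) atTop (𝓝 γ)) :
    Tendsto (fun N : ℕ => Hgen (a + 1) N - log (N + (a + 1))) atTop (𝓝 (γ - 1 / a)) := by
  refine ((h.comp (tendsto_add_atTop_nat 1)).sub_const (1 / a)).congr fun N => ?_
  simp only [Function.comp, Hgen_succ]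
  push_cast
  ring_nf

lemma log_sub_log_le_div {u v : ℝ} (hu : 0 < u) (hv : 0 < v) : log v - log u ≤ (v - u) / u := by
  rw [← log_div hv.ne' hu.ne']
  calc log (v / u) ≤ v / u - 1 := log_le_sub_one_of_pos (div_pos hv hu)
    _ = (v - u) / u := by field_simp

lemma tendsto_log_pow_sub_log_floor_pow {a : ℝ} (ha : 0 < a) (p : ℕ) :
    Tendsto (fun x : ℝ => log (x + a) ^ p - log (⌊x⌋₊ + a) ^ p) atTop (𝓝 0) := by
  have hbound : ∀ x : ℝ, 1 ≤ x →
      |log (x + a) ^ p - log (⌊x⌋₊ + a) ^ p| ≤ p * (log (x + a) ^ (p - 1) / (x + a - 1)) := by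
    intro x hx
    have hfloor_ge : (1 : ℝ) ≤ ⌊x⌋₊ := by exact_mod_cast Nat.one_le_floor_iff x |>.2 hx
    have hfloor_le : (⌊x⌋₊ : ℝ) ≤ x := Nat.floor_le (by linarith)
    have hfloor_gt : x - 1 < ⌊x⌋₊ := Nat.sub_one_lt_floor x
    have hlog_floor : 0 ≤ log (⌊x⌋₊ + a) := log_nonneg (by linarith)
    have hlog_le : log (⌊x⌋₊ + a) ≤ log (x + a) := log_le_log (by linarith) (by linarith)
    have hdiff : log (x + a) - log (⌊x⌋₊ + a) ≤ 1 / (x + a - 1) :=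
      (log_sub_log_le_div (by linarith) (by linarith)).trans
        (div_le_div₀ zero_le_one (by linarith) (by linarith) (by linarith))
    calc |log (x + a) ^ p - log (⌊x⌋₊ + a) ^ p|
        ≤ |log (x + a) - log (⌊x⌋₊ + a)| * p * max |log (x + a)| |log (⌊x⌋₊ + a)| ^ (p - 1) :=
          abs_pow_sub_pow_le ..
      _ = (log (x + a) - log (⌊x⌋₊ + a)) * p * log (x + a) ^ (p - 1) := by
          rw [abs_of_nonneg (by linarith), abs_of_nonneg (by linarith), abs_of_nonneg hlog_floor,
            max_eq_left hlog_le]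
      _ ≤ 1 / (x + a - 1) * p * log (x + a) ^ (p - 1) := by
          have := pow_nonneg (hlog_floor.trans hlog_le) (p - 1)
          gcongr
      _ = p * (log (x + a) ^ (p - 1) / (x + a - 1)) := by ring
  have hlim : Tendsto (fun x : ℝ => p * (log (x + a) ^ (p - 1) / (x + a - 1))) atTop (𝓝 0) := by
    have := (tendsto_pow_log_div_mul_add_atTop 1 (-1) (p - 1) one_ne_zero).comp
      (tendsto_atTop_add_const_right atTop a tendsto_id)
    simpa [Function.comp, ← sub_eq_add_neg] using this.const_mul (p : ℝ)
  exact squeeze_zero_norm' (eventually_atTop.2 ⟨1, hbound⟩) hlim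

lemma tendsto_floor_of_tendsto_sub_log_pow {a c L : ℝ} (ha : 0 < a) (p : ℕ) {u : ℕ → ℝ}
    (h : Tendsto (fun N : ℕ => u N - log (N + a) ^ p / c) atTop (𝓝 L)) :
    Tendsto (fun x : ℝ => u ⌊x⌋₊ - log (x + a) ^ p / c) atTop (𝓝 L) := by
  have := (h.comp tendsto_nat_floor_atTop).sub
    ((tendsto_log_pow_sub_log_floor_pow ha p).div_const c)
  rw [zero_div, sub_zero] at this
  refine this.congr fun x => ?_
  simp only [Function.comp]
  ring

theorem stmt1_general (a : ℝ) (ha0 : 0 < a) (m : ℕ)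
    (γ0a γ0a1 γma γHma : ℝ)
    -- `γ(0,a)`
    (hγ0a : Tendsto
      (fun N : ℕ => (∑ n ∈ Finset.range (N + 1), 1 / ((n : ℝ) + a)) - Real.log ((N : ℝ) + a))
      atTop (nhds γ0a))
    -- `γ(0,a+1)`
    (hγ0a1 : Tendsto
      (fun N : ℕ =>
        (∑ n ∈ Finset.range (N + 1), 1 / ((n : ℝ) + (a + 1))) - Real.log ((N : ℝ) + (a + 1)))
      atTop (nhds γ0a1))
    -- the generalized Stieltjes constant `γ(m,a)`
    (hγma : Tendsto
      (fun N : ℕ =>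
        (∑ n ∈ Finset.range (N + 1), Real.log ((n : ℝ) + a) ^ m / ((n : ℝ) + a))
          - Real.log ((N : ℝ) + a) ^ (m + 1) / ((m : ℝ) + 1))
      atTop (nhds γma))
    -- the harmonic Stieltjes constant `γ_H(m,a)`
    (hγHma : Tendsto (fun x : ℝ =>
        (∑ n ∈ Finset.range (Nat.floor x + 1),
            Hgen a n * Real.log ((n : ℝ) + a) ^ m / ((n : ℝ) + a))
          - Real.log (x + a) ^ (m + 2) / ((m : ℝ) + 2)
          - γ0a * Real.log (x + a) ^ (m + 1) / ((m : ℝ) + 1)) atTop (nhds γHma)) :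
    -- the limit defining `γ_H(m,a+1)` exists and equals `γ_H(m,a) - γ(m,a)/a`
    Tendsto (fun x : ℝ =>
        (∑ n ∈ Finset.range (Nat.floor x + 1),
            Hgen (a + 1) n * Real.log ((n : ℝ) + (a + 1)) ^ m / ((n : ℝ) + (a + 1)))
          - Real.log (x + (a + 1)) ^ (m + 2) / ((m : ℝ) + 2)
          - γ0a1 * Real.log (x + (a + 1)) ^ (m + 1) / ((m : ℝ) + 1)) atTop
      (nhds (γHma - γma / a)) := by
  have hγ0a1_eq : γ0a1 = γ0a - 1 / a :=
    tendsto_nhds_unique hγ0a1 (tendsto_Hgen_add_one_sub_log hγ0a)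
  have hlim := (hγHma.sub ((tendsto_floor_of_tendsto_sub_log_pow ha0 (m + 1) hγma).const_mul (1 / a))).comp
    (tendsto_atTop_add_const_right atTop 1 tendsto_id)
  rw [one_div_mul_eq_div] at hlim
  refine hlim.congr' ?_
  filter_upwards [eventually_ge_atTop 0] with x hx
  have hsum := sum_range_Hgen_add_one_mul a (fun t => log t ^ m / t) ⌊x⌋₊
  simp only [← mul_div_assoc] at hsum
  rw [show x + (a + 1) = x + 1 + a by ring, hsum, hγ0a1_eq]
  simp only [Function.comp, id, Nat.floor_add_one hx]
  ring

theorem stmt1 (a : ℝ) (ha0 : 0 < a) (ha1 : a ≤ 1) (m : ℕ)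
    (γ0a γ0a1 γma γHma : ℝ)
    -- `γ(0,a)`
    (hγ0a : Tendsto
      (fun N : ℕ => (∑ n ∈ Finset.range (N + 1), 1 / ((n : ℝ) + a)) - Real.log ((N : ℝ) + a))
      atTop (nhds γ0a))
    -- `γ(0,a+1)`
    (hγ0a1 : Tendsto
      (fun N : ℕ =>
        (∑ n ∈ Finset.range (N + 1), 1 / ((n : ℝ) + (a + 1))) - Real.log ((N : ℝ) + (a + 1)))
      atTop (nhds γ0a1))
    -- the generalized Stieltjes constant `γ(m,a)`
    (hγma : Tendsto
      (fun N : ℕ =>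
        (∑ n ∈ Finset.range (N + 1), Real.log ((n : ℝ) + a) ^ m / ((n : ℝ) + a))
          - Real.log ((N : ℝ) + a) ^ (m + 1) / ((m : ℝ) + 1))
      atTop (nhds γma))
    -- the harmonic Stieltjes constant `γ_H(m,a)`
    (hγHma : Tendsto (fun x : ℝ =>
        (∑ n ∈ Finset.range (Nat.floor x + 1),
            Hgen a n * Real.log ((n : ℝ) + a) ^ m / ((n : ℝ) + a))
          - Real.log (x + a) ^ (m + 2) / ((m : ℝ) + 2)
          - γ0a * Real.log (x + a) ^ (m + 1) / ((m : ℝ) + 1)) atTop (nhds γHma)) :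
    -- the limit defining `γ_H(m,a+1)` exists and equals `γ_H(m,a) - γ(m,a)/a`
    Tendsto (fun x : ℝ =>
        (∑ n ∈ Finset.range (Nat.floor x + 1),
            Hgen (a + 1) n * Real.log ((n : ℝ) + (a + 1)) ^ m / ((n : ℝ) + (a + 1)))
          - Real.log (x + (a + 1)) ^ (m + 2) / ((m : ℝ) + 2)
          - γ0a1 * Real.log (x + (a + 1)) ^ (m + 1) / ((m : ℝ) + 1)) atTop
      (nhds (γHma - γma / a)) :=
  stmt1_general a ha0 m γ0a γ0a1 γma γHma hγ0a hγ0a1 hγma hγHma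
end

section
/- For every positive integer n and every integer m ≥ 0, γ_H(m, n+1) = γ_H(m) − Σ_{k=1}^n γ(m,k)/k, where γ_H(m) = γ_H(m,1). -/
/-!
Shifting the parameter `a` to `a + 1` drops the first term of every defining sum:
`H_k(a + 1) = H_{k+1}(a) - 1/a`, so the partial sums of `γ_H(m, a + 1)` are those of `γ_H(m, a)`
minus `1/a` times those of `γ(m, a)`, while `γ(0, a + 1) = γ(0, a) - 1/a` absorbs the change in
the `log^{m+1}` term. Passing to the limit gives `γ_H(m, a + 1) = γ_H(m, a) - γ(m, a)/a`, and the
theorem follows by induction on `n`.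
-/

open Filter Finset MeasureTheory

noncomputable def stieltjesPartialSum (m : ℕ) (a : ℝ) (N : ℕ) : ℝ :=
  ∑ k ∈ range (N + 1), Real.log ((k : ℝ) + a) ^ m / ((k : ℝ) + a)

noncomputable def harmonicStieltjesPartialSum (m : ℕ) (a : ℝ) (N : ℕ) : ℝ :=
  ∑ k ∈ range (N + 1), Hgen a k * Real.log ((k : ℝ) + a) ^ m / ((k : ℝ) + a)

lemma natCast_add_add_one (k : ℕ) (a : ℝ) : (k : ℝ) + (a + 1) = ((k + 1 : ℕ) : ℝ) + a := by
  push_cast; ring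

lemma Hgen_add_one (a : ℝ) (k : ℕ) : Hgen (a + 1) k = Hgen a (k + 1) - 1 / a := by
  rw [Hgen, Hgen, sum_range_succ' _ (k + 1)]
  simp [natCast_add_add_one]

lemma harmonicStieltjesPartialSum_add_one (m : ℕ) (a : ℝ) (N : ℕ) :
    harmonicStieltjesPartialSum m (a + 1) N
      = harmonicStieltjesPartialSum m a (N + 1) - 1 / a * stieltjesPartialSum m a (N + 1) := by
  set g : ℕ → ℝ := fun k => (Hgen a k - 1 / a) * Real.log ((k : ℝ) + a) ^ m / ((k : ℝ) + a)
  -- `g 0 = 0` because `H_0(a) = 1/a`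
  have hg0 : g 0 = 0 := by simp [g, Hgen]
  calc harmonicStieltjesPartialSum m (a + 1) N = ∑ k ∈ range (N + 1), g (k + 1) :=
        sum_congr rfl fun k _ => by simp only [g, Hgen_add_one, natCast_add_add_one]
    _ = ∑ k ∈ range (N + 2), g k := by rw [sum_range_succ' g, hg0, add_zero]
    _ = _ := by
      rw [harmonicStieltjesPartialSum, stieltjesPartialSum, mul_sum, ← sum_sub_distrib]
      exact sum_congr rfl fun k _ => by ring

section Recursions

variable {m : ℕ} {a : ℝ} {γ0 γm γH : ℝ → ℝ}

lemma stieltjesZero_add_one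
    (h0 : Tendsto (fun N : ℕ => Hgen a N - Real.log ((N : ℝ) + a)) atTop (nhds (γ0 a)))
    (h1 : Tendsto (fun N : ℕ => Hgen (a + 1) N - Real.log ((N : ℝ) + (a + 1))) atTop
      (nhds (γ0 (a + 1)))) :
    γ0 (a + 1) = γ0 a - 1 / a := by
  have hshift := (h0.comp (tendsto_add_atTop_nat 1)).sub_const (1 / a)
  refine tendsto_nhds_unique h1 (hshift.congr fun N => ?_)
  simp only [Function.comp, Hgen_add_one, natCast_add_add_one]
  ring

lemma tendsto_harmonicStieltjesPartialSum
    (h : Tendsto (fun x : ℝ =>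
        (∑ k ∈ range (Nat.floor x + 1), Hgen a k * Real.log ((k : ℝ) + a) ^ m / ((k : ℝ) + a))
          - Real.log (x + a) ^ (m + 2) / ((m : ℝ) + 2)
          - γ0 a * Real.log (x + a) ^ (m + 1) / ((m : ℝ) + 1)) atTop (nhds (γH a))) :
    Tendsto (fun N : ℕ => harmonicStieltjesPartialSum m a N
        - Real.log ((N : ℝ) + a) ^ (m + 2) / ((m : ℝ) + 2)
        - γ0 a * Real.log ((N : ℝ) + a) ^ (m + 1) / ((m : ℝ) + 1)) atTop (nhds (γH a)) :=
  (h.comp tendsto_natCast_atTop_atTop).congr fun N => by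
    simp [harmonicStieltjesPartialSum]

lemma harmonicStieltjes_add_one (hγ0 : γ0 (a + 1) = γ0 a - 1 / a)
    (hm : Tendsto (fun N : ℕ =>
        stieltjesPartialSum m a N - Real.log ((N : ℝ) + a) ^ (m + 1) / ((m : ℝ) + 1))
      atTop (nhds (γm a)))
    (hH0 : Tendsto (fun N : ℕ => harmonicStieltjesPartialSum m a N
        - Real.log ((N : ℝ) + a) ^ (m + 2) / ((m : ℝ) + 2)
        - γ0 a * Real.log ((N : ℝ) + a) ^ (m + 1) / ((m : ℝ) + 1)) atTop (nhds (γH a)))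
    (hH1 : Tendsto (fun N : ℕ => harmonicStieltjesPartialSum m (a + 1) N
        - Real.log ((N : ℝ) + (a + 1)) ^ (m + 2) / ((m : ℝ) + 2)
        - γ0 (a + 1) * Real.log ((N : ℝ) + (a + 1)) ^ (m + 1) / ((m : ℝ) + 1)) atTop
      (nhds (γH (a + 1)))) :
    γH (a + 1) = γH a - γm a / a := by
  have hshift := (hH0.sub (hm.const_mul (1 / a))).comp (tendsto_add_atTop_nat 1)
  refine (tendsto_nhds_unique hH1 (hshift.congr fun N => ?_)).trans (by ring)
  simp only [Function.comp, harmonicStieltjesPartialSum_add_one, hγ0, natCast_add_add_one]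
  ring

end Recursions

theorem stmt2_general (n : ℕ) (m : ℕ)
    (γ0 γm γH : ℝ → ℝ)
    -- `γ(0,a)` for every `a > 0`
    (hγ0 : ∀ a : ℝ, 0 < a → Tendsto
      (fun N : ℕ => (∑ k ∈ Finset.range (N + 1), 1 / ((k : ℝ) + a)) - Real.log ((N : ℝ) + a))
      atTop (nhds (γ0 a)))
    -- the generalized Stieltjes constants `γ(m,a)` for every `a > 0`
    (hγm : ∀ a : ℝ, 0 < a → Tendsto
      (fun N : ℕ =>
        (∑ k ∈ Finset.range (N + 1), Real.log ((k : ℝ) + a) ^ m / ((k : ℝ) + a))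
          - Real.log ((N : ℝ) + a) ^ (m + 1) / ((m : ℝ) + 1))
      atTop (nhds (γm a)))
    -- the harmonic Stieltjes constants `γ_H(m,a)` for every `a > 0`
    (hγH : ∀ a : ℝ, 0 < a → Tendsto (fun x : ℝ =>
        (∑ k ∈ Finset.range (Nat.floor x + 1),
            Hgen a k * Real.log ((k : ℝ) + a) ^ m / ((k : ℝ) + a))
          - Real.log (x + a) ^ (m + 2) / ((m : ℝ) + 2)
          - γ0 a * Real.log (x + a) ^ (m + 1) / ((m : ℝ) + 1)) atTop (nhds (γH a))) :
    γH ((n : ℝ) + 1) = γH 1 - ∑ k ∈ Finset.Icc 1 n, γm (k : ℝ) / (k : ℝ) := by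
  induction n with
  | zero => simp
  | succ p ih =>
    have ha : (0 : ℝ) < p + 1 := by positivity
    have hstep := harmonicStieltjes_add_one (stieltjesZero_add_one (hγ0 _ ha) (hγ0 _ (by linarith)))
      (hγm _ ha) (tendsto_harmonicStieltjesPartialSum (hγH _ ha))
      (tendsto_harmonicStieltjesPartialSum (hγH _ (by linarith)))
    rw [Nat.cast_succ, hstep, ih,
      sum_Icc_succ_top (by omega : 1 ≤ p + 1), Nat.cast_succ]
    ring

theorem stmt2 (n : ℕ) (hn : 1 ≤ n) (m : ℕ)
    (γ0 γm γH : ℝ → ℝ)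
    -- `γ(0,a)` for every `a > 0`
    (hγ0 : ∀ a : ℝ, 0 < a → Tendsto
      (fun N : ℕ => (∑ k ∈ Finset.range (N + 1), 1 / ((k : ℝ) + a)) - Real.log ((N : ℝ) + a))
      atTop (nhds (γ0 a)))
    -- the generalized Stieltjes constants `γ(m,a)` for every `a > 0`
    (hγm : ∀ a : ℝ, 0 < a → Tendsto
      (fun N : ℕ =>
        (∑ k ∈ Finset.range (N + 1), Real.log ((k : ℝ) + a) ^ m / ((k : ℝ) + a))
          - Real.log ((N : ℝ) + a) ^ (m + 1) / ((m : ℝ) + 1))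
      atTop (nhds (γm a)))
    -- the harmonic Stieltjes constants `γ_H(m,a)` for every `a > 0`
    (hγH : ∀ a : ℝ, 0 < a → Tendsto (fun x : ℝ =>
        (∑ k ∈ Finset.range (Nat.floor x + 1),
            Hgen a k * Real.log ((k : ℝ) + a) ^ m / ((k : ℝ) + a))
          - Real.log (x + a) ^ (m + 2) / ((m : ℝ) + 2)
          - γ0 a * Real.log (x + a) ^ (m + 1) / ((m : ℝ) + 1)) atTop (nhds (γH a))) :
    γH ((n : ℝ) + 1) = γH 1 - ∑ k ∈ Finset.Icc 1 n, γm (k : ℝ) / (k : ℝ) :=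
  stmt2_general n m γ0 γm γH hγ0 hγm hγH
end

section
/- For every complex s with Re(s) > 1, the harmonic zeta function satisfies ζ_H(s) = −(1/Γ(s)) · ∫_0^∞ x^{s−1} log(1 − e^{−x}) / (1 − e^{−x}) dx. -/
/-!
Expanding `-log (1 - y)` and `1 / (1 - y)` as power series and multiplying them gives
`∑ H_n yⁿ = -log (1 - y) / (1 - y)` for `|y| < 1`. At `y = e^{-x}` the integrand is therefore
`-x^{s-1} ∑ H_n e^{-n x}`, and integrating term by term with `∫₀^∞ x^{s-1} e^{-n x} dx = Γ(s) / n^s`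
(Mathlib's `hasSum_mellin`) gives `-Γ(s) ζ_H(s)`; the bound `H_n ≤ 1 + log n` justifies the
interchange for `Re s > 1`.
-/

open Filter Finset MeasureTheory

/-- The harmonic number `H_n = ∑_{k=1}^n 1/k` (so `Hnum n = ∑_{k<n} 1/(k+1)`). -/
noncomputable def Hnum (n : ℕ) : ℝ := ∑ k ∈ Finset.range n, 1 / ((k : ℝ) + 1)

/-- The harmonic zeta function `ζ_H(s) = ∑_{n=1}^∞ H_n/n^s`. -/
noncomputable def zetaHnat (s : ℂ) : ℂ := ∑' n : ℕ, (Hnum (n + 1) : ℂ) / ((n : ℂ) + 1) ^ s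

lemma Hnum_nonneg (n : ℕ) : 0 ≤ Hnum n := by
  unfold Hnum
  positivity

lemma Hnum_le_one_add_log (n : ℕ) : Hnum n ≤ 1 + Real.log n := by
  convert harmonic_le_one_add_log n using 1
  simp [Hnum, harmonic, one_div]

lemma Hnum_succ_le_rpow {ε : ℝ} (hε : 0 < ε) (n : ℕ) :
    Hnum (n + 1) ≤ (1 + 1 / ε) * ((n : ℝ) + 1) ^ ε := by
  have hn : (0 : ℝ) < (n : ℝ) + 1 := by positivity
  have h_one : 1 ≤ ((n : ℝ) + 1) ^ ε := Real.one_le_rpow (by linarith) hε.le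
  have h_log : Real.log ((n : ℝ) + 1) ≤ ((n : ℝ) + 1) ^ ε / ε := Real.log_le_rpow_div hn.le hε
  calc Hnum (n + 1) ≤ 1 + Real.log ((n : ℝ) + 1) := by exact_mod_cast Hnum_le_one_add_log (n + 1)
    _ ≤ ((n : ℝ) + 1) ^ ε + ((n : ℝ) + 1) ^ ε / ε := by gcongr
    _ = (1 + 1 / ε) * ((n : ℝ) + 1) ^ ε := by ring

lemma summable_Hnum_div_rpow {σ : ℝ} (hσ : 1 < σ) :
    Summable fun n : ℕ => Hnum (n + 1) / ((n : ℝ) + 1) ^ σ := by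
  obtain ⟨ε, hε, hεσ⟩ : ∃ ε : ℝ, 0 < ε ∧ ε - σ < -1 := ⟨(σ - 1) / 2, by linarith, by linarith⟩
  have h_major : Summable fun n : ℕ => (1 + 1 / ε) * ((n : ℝ) + 1) ^ (ε - σ) := by
    refine Summable.mul_left _ ?_
    exact_mod_cast (summable_nat_add_iff 1).mpr (Real.summable_nat_rpow.mpr hεσ)
  refine h_major.of_nonneg_of_le (fun n => by have := Hnum_nonneg (n + 1); positivity)
    fun n => ?_
  rw [Real.rpow_sub (by positivity), ← mul_div_assoc]
  gcongr
  exact Hnum_succ_le_rpow hε n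

lemma hasSum_Hnum_mul_pow {y : ℝ} (hy : |y| < 1) :
    HasSum (fun n : ℕ => Hnum (n + 1) * y ^ (n + 1)) (-Real.log (1 - y) / (1 - y)) := by
  have h_log := Real.hasSum_pow_div_log_of_abs_lt_one hy
  have h_geom := hasSum_geometric_of_abs_lt_one hy
  have h_log_norm : Summable fun k : ℕ => ‖y ^ (k + 1) / (k + 1)‖ :=
    (Real.hasSum_pow_div_log_of_abs_lt_one (by rwa [abs_abs])).summable.congr fun k => by
      rw [Real.norm_eq_abs, abs_div, abs_pow, abs_of_pos (by positivity : (0 : ℝ) < k + 1)]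
  have h_geom_norm : Summable fun k : ℕ => ‖y ^ k‖ := by
    simpa [norm_pow] using summable_geometric_of_lt_one (abs_nonneg y) hy
  have h_prod := hasSum_sum_range_mul_of_summable_norm h_log_norm h_geom_norm
  rw [h_log.tsum_eq, h_geom.tsum_eq, ← div_eq_mul_inv] at h_prod
  refine h_prod.congr_fun fun n => ?_
  rw [Hnum, sum_mul]
  refine sum_congr rfl fun k hk => ?_
  have hkn : k ≤ n := Nat.lt_succ_iff.mp (mem_range.mp hk)
  rw [div_mul_eq_mul_div, div_mul_eq_mul_div, one_mul, ← pow_add, Nat.add_right_comm,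
    Nat.add_sub_cancel' hkn]

lemma hasSum_neg_Hnum_mul_exp {t : ℝ} (ht : 0 < t) :
    HasSum (fun n : ℕ => -(Hnum (n + 1) : ℂ) * Real.exp (-((n : ℝ) + 1) * t))
      (Real.log (1 - Real.exp (-t)) / (1 - Real.exp (-t)) : ℝ) := by
  have hy : |Real.exp (-t)| < 1 := by
    rw [abs_of_pos (Real.exp_pos _), Real.exp_lt_one_iff]
    linarith
  have h_real := (hasSum_Hnum_mul_pow hy).neg
  rw [neg_div, neg_neg] at h_real
  refine (Complex.hasSum_ofReal.mpr h_real).congr_fun fun n => ?_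
  rw [← Real.exp_nat_mul]
  push_cast
  ring_nf

theorem stmt8 (s : ℂ) (hs : 1 < s.re) :
    zetaHnat s = -(1 / Complex.Gamma s) * ∫ x in Set.Ioi (0 : ℝ),
      (x : ℂ) ^ (s - 1) * ((Real.log (1 - Real.exp (-x)) : ℝ) : ℂ)
        / (1 - ((Real.exp (-x) : ℝ) : ℂ)) := by
  set F : ℝ → ℂ := fun x =>
    ((Real.log (1 - Real.exp (-x)) : ℝ) : ℂ) / (1 - ((Real.exp (-x) : ℝ) : ℂ))
  have h_integral : mellin F s = ∫ x in Set.Ioi (0 : ℝ),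
      (x : ℂ) ^ (s - 1) * ((Real.log (1 - Real.exp (-x)) : ℝ) : ℂ)
        / (1 - ((Real.exp (-x) : ℝ) : ℂ)) := by
    simp only [mellin, smul_eq_mul, F, mul_div_assoc]
  have h_dirichlet : HasSum
      (fun n : ℕ => Complex.Gamma s * -(Hnum (n + 1) : ℂ) / ((n : ℝ) + 1 : ℝ) ^ s) (mellin F s) := by
    refine hasSum_mellin (fun n => Or.inr (by positivity)) (by linarith)
      (fun t ht => by simpa [F] using hasSum_neg_Hnum_mul_exp ht) ?_
    simpa [abs_of_nonneg (Hnum_nonneg _)] using summable_Hnum_div_rpow hs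
  have h_mellin : mellin F s = -(Complex.Gamma s * zetaHnat s) := by
    rw [← h_dirichlet.tsum_eq, zetaHnat, ← tsum_mul_left, ← tsum_neg]
    congr 1
    funext n
    push_cast
    ring
  rw [← h_integral, h_mellin]
  field_simp [Complex.Gamma_ne_zero_of_re_pos (by linarith : 0 < s.re)]
end

section
/- Let a be a complex number with Re(a) > 0. For every complex s with Re(s) > 1, ζ_H(s,a) = ζ_H(s) + (1/Γ(s)) · ∫_0^∞ x^{s−1} ( e^{−a x} Φ(e^{−x}, 1; a) + log(1 − e^{−x}) ) / (1 − e^{−x}) dx. -/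
open Filter Finset MeasureTheory

/-- `Hc a n = ∑_{k=0}^n 1/(k+a)` for complex `a`. -/
noncomputable def Hc (a : ℂ) (n : ℕ) : ℂ := ∑ k ∈ Finset.range (n + 1), 1 / ((k : ℂ) + a)

/-- The harmonic Hurwitz zeta function `ζ_H(s,a) = ∑_{n=0}^∞ H_n(a)/(n+a)^s`. -/
noncomputable def zetaHc (s a : ℂ) : ℂ := ∑' n : ℕ, Hc a n / ((n : ℂ) + a) ^ s

/-- The Lerch transcendent `Φ(x,1;a) = ∑_{k=0}^∞ x^k/(k+a)`. -/
noncomputable def lerchPhi1 (x a : ℂ) : ℂ := ∑' k : ℕ, x ^ k / ((k : ℂ) + a)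

/-!
For `0 < re b` one has `Γ(s) / (n + b) ^ s = ∫₀^∞ t^(s-1) e^(-(n+b)t) dt`: both sides are
holomorphic in `b` on the right half-plane and agree for real `b`. Summing against `H_n(b)` and
interchanging sum and integral, which is legitimate because `|H_n(b)| = O((n+1)^ε)` for every
`ε > 0`, exhibits `Γ(s) ζ_H(s,b)` as the Mellin transform of
`∑ H_n(b) e^(-(n+b)t) = e^(-bt) Φ(e^(-t),1;b) / (1 - e^(-t))`, the Cauchy product of the Lerch
series with the geometric series. Subtracting the case `b = 1` and using
`e^(-t) Φ(e^(-t),1;1) = -log(1 - e^(-t))` gives the formula.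
-/

section

open Complex Topology

lemma norm_cpow_mul_cexp_neg_mul {t : ℝ} (ht : 0 < t) (s b : ℂ) :
    ‖(t : ℂ) ^ (s - 1) * cexp (-(b * t))‖ = t ^ (s.re - 1) * Real.exp (-(b.re * t)) := by
  rw [norm_mul, norm_cpow_eq_rpow_re_of_pos ht, norm_exp]
  simp

lemma integrableOn_rpow_mul_exp_neg_mul {σ r : ℝ} (hσ : 0 < σ) (hr : 0 < r) :
    IntegrableOn (fun t : ℝ => t ^ (σ - 1) * Real.exp (-(r * t))) (Set.Ioi 0) := by
  simpa [Real.rpow_one] using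
    integrableOn_rpow_mul_exp_neg_mul_rpow (s := σ - 1) (by linarith) one_pos hr

lemma aestronglyMeasurable_cpow_mul_cexp_neg_mul (s b : ℂ) :
    AEStronglyMeasurable (fun t : ℝ => (t : ℂ) ^ (s - 1) * cexp (-(b * t)))
      (volume.restrict (Set.Ioi 0)) := by
  fun_prop

lemma integrableOn_cpow_mul_cexp_neg_mul {s b : ℂ} (hs : 0 < s.re) (hb : 0 < b.re) :
    IntegrableOn (fun t : ℝ => (t : ℂ) ^ (s - 1) * cexp (-(b * t))) (Set.Ioi 0) := by
  refine Integrable.mono' (integrableOn_rpow_mul_exp_neg_mul hs hb)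
    (aestronglyMeasurable_cpow_mul_cexp_neg_mul s b) ?_
  filter_upwards [ae_restrict_mem measurableSet_Ioi] with t ht
  exact (norm_cpow_mul_cexp_neg_mul ht s b).le

lemma hasDerivAt_cpow_mul_cexp_neg_mul {t : ℝ} (ht : 0 < t) (s b : ℂ) :
    HasDerivAt (fun b : ℂ => (t : ℂ) ^ (s - 1) * cexp (-(b * t)))
      (-((t : ℂ) ^ (s + 1 - 1) * cexp (-(b * t)))) b := by
  have ht' : (t : ℂ) ≠ 0 := ofReal_ne_zero.mpr ht.ne'
  refine ((hasDerivAt_mul_const (t : ℂ)).fun_neg.cexp.const_mul ((t : ℂ) ^ (s - 1))).congr_deriv ?_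
  rw [add_sub_cancel_right, ← sub_add_cancel s 1, cpow_add _ _ ht', cpow_one, add_sub_cancel_right]
  ring

lemma differentiableOn_integral_cpow_mul_cexp_neg_mul {s : ℂ} (hs : 0 < s.re) :
    DifferentiableOn ℂ (fun b : ℂ => ∫ t in Set.Ioi (0 : ℝ), (t : ℂ) ^ (s - 1) * cexp (-(b * t)))
      {b | 0 < b.re} := by
  intro b₀ (hb₀ : 0 < b₀.re)
  have hδ : 0 < b₀.re / 2 := half_pos hb₀
  have hball : ∀ b ∈ Metric.ball b₀ (b₀.re / 2), b₀.re / 2 ≤ b.re := fun b hb => by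
    have := (abs_re_le_norm (b - b₀)).trans (mem_ball_iff_norm.mp hb).le
    rw [sub_re] at this
    linarith [neg_abs_le (b.re - b₀.re)]
  refine DifferentiableAt.differentiableWithinAt <| HasDerivAt.differentiableAt
    (hasDerivAt_integral_of_dominated_loc_of_deriv_le
      (F' := fun b t => -((t : ℂ) ^ (s + 1 - 1) * cexp (-(b * t))))
      (bound := fun t => t ^ (s.re + 1 - 1) * Real.exp (-(b₀.re / 2 * t)))
      (Metric.ball_mem_nhds b₀ hδ)
      (.of_forall fun b => aestronglyMeasurable_cpow_mul_cexp_neg_mul s b)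
      (integrableOn_cpow_mul_cexp_neg_mul hs hb₀)
      (aestronglyMeasurable_cpow_mul_cexp_neg_mul (s + 1) b₀).neg ?_
      (integrableOn_rpow_mul_exp_neg_mul (by linarith) hδ) ?_).2
  · filter_upwards [ae_restrict_mem measurableSet_Ioi] with t (ht : 0 < t) b hb
    rw [norm_neg, norm_cpow_mul_cexp_neg_mul ht, add_re, one_re]
    gcongr
    nlinarith [hball b hb]
  · filter_upwards [ae_restrict_mem measurableSet_Ioi] with t ht b _
    exact hasDerivAt_cpow_mul_cexp_neg_mul ht s b

lemma integral_cpow_mul_cexp_neg_mul_Ioi {s b : ℂ} (hs : 0 < s.re) (hb : 0 < b.re) :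
    ∫ t in Set.Ioi (0 : ℝ), (t : ℂ) ^ (s - 1) * cexp (-(b * t)) = Gamma s / b ^ s := by
  have hU : IsOpen {b : ℂ | 0 < b.re} := isOpen_lt continuous_const continuous_re
  have hG : DifferentiableOn ℂ (fun b : ℂ => Gamma s / b ^ s) {b | 0 < b.re} :=
    fun b (hb : 0 < b.re) => ((differentiableAt_const _).div
      (differentiableAt_id.cpow_const (Or.inl hb))
      (by simp [cpow_eq_zero_iff, ne_zero_of_re_pos hb])).differentiableWithinAt
  have h_real : ∀ r : ℝ, 0 < r →
      ∫ t in Set.Ioi (0 : ℝ), (t : ℂ) ^ (s - 1) * cexp (-(r * t)) = Gamma s / (r : ℂ) ^ s := by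
    intro r hr
    rw [integral_cpow_mul_exp_neg_mul_Ioi hs hr, one_div,
      inv_cpow _ _ (by rw [arg_ofReal_of_nonneg hr.le]; exact Real.pi_ne_zero.symm), inv_mul_eq_div]
  have h_ofReal : Tendsto ((↑) : ℝ → ℂ) (𝓝[>] 1) (𝓝[≠] 1) :=
    tendsto_nhdsWithin_of_tendsto_nhds_of_eventually_within _
      ((continuous_ofReal.tendsto' 1 1 ofReal_one).mono_left nhdsWithin_le_nhds)
      (eventually_nhdsWithin_of_forall fun r (hr : 1 < r) => by simpa using hr.ne')
  have h_freq : ∃ᶠ z in 𝓝[≠] (1 : ℂ),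
      ∫ t in Set.Ioi (0 : ℝ), (t : ℂ) ^ (s - 1) * cexp (-(z * t)) = Gamma s / z ^ s :=
    h_ofReal.frequently (eventually_nhdsWithin_of_forall (s := Set.Ioi (1 : ℝ)) fun r hr =>
      h_real r (one_pos.trans hr)).frequently
  exact ((differentiableOn_integral_cpow_mul_cexp_neg_mul hs).analyticOnNhd hU)
    |>.eqOn_of_preconnected_of_frequently_eq (hG.analyticOnNhd hU) (convex_halfSpace_re_gt 0).isPreconnected (by simp) h_freq hb

lemma hasSum_mellin_cexp {ι : Type*} [Countable ι] {c p : ι → ℂ} {F : ℝ → ℂ} {s : ℂ}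
    (hp : ∀ i, 0 < (p i).re) (hs : 0 < s.re)
    (hF : ∀ t ∈ Set.Ioi (0 : ℝ), HasSum (fun i => c i * cexp (-(p i * t))) (F t))
    (h_sum : Summable fun i => ‖c i‖ / (p i).re ^ s.re) :
    HasSum (fun i => Gamma s * c i / p i ^ s) (mellin F s) := by
  have h_mellin : mellin F s = ∫ t in Set.Ioi (0 : ℝ),
      ∑' i, c i * ((t : ℂ) ^ (s - 1) * cexp (-(p i * t))) := by
    refine setIntegral_congr_fun measurableSet_Ioi fun t ht => ?_
    simp_rw [smul_eq_mul, ← (hF t ht).tsum_eq, ← tsum_mul_left, mul_left_comm]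
  have h_norm : ∀ i, ∫ t in Set.Ioi (0 : ℝ), ‖c i * ((t : ℂ) ^ (s - 1) * cexp (-(p i * t)))‖
      = ‖c i‖ / (p i).re ^ s.re * Real.Gamma s.re := fun i => by
    rw [← setIntegral_congr_fun measurableSet_Ioi fun t (ht : 0 < t) => by
      rw [norm_mul, norm_cpow_mul_cexp_neg_mul ht], integral_const_mul,
      Real.integral_rpow_mul_exp_neg_mul_Ioi hs (hp i), Real.div_rpow zero_le_one (hp i).le,
      Real.one_rpow]
    ring
  rw [h_mellin]
  refine (hasSum_integral_of_summable_integral_norm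
    (fun i => (integrableOn_cpow_mul_cexp_neg_mul hs (hp i)).const_mul (c i))
    ((h_sum.mul_right (Real.Gamma s.re)).congr fun i => (h_norm i).symm)).congr_fun fun i => ?_
  rw [integral_const_mul, integral_cpow_mul_cexp_neg_mul_Ioi hs (hp i)]
  ring

lemma natCast_add_re_le_norm (k : ℕ) (a : ℂ) : (k : ℝ) + a.re ≤ ‖(k : ℂ) + a‖ := by
  simpa using Complex.re_le_norm ((k : ℂ) + a)

lemma summable_norm_pow_div_natCast_add {a x : ℂ} (ha : 0 < a.re) (hx : ‖x‖ < 1) :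
    Summable fun k : ℕ => ‖x ^ k / ((k : ℂ) + a)‖ := by
  refine .of_nonneg_of_le (fun _ => norm_nonneg _) (fun k => ?_)
    ((summable_geometric_of_lt_one (norm_nonneg x) hx).div_const a.re)
  rw [norm_div, norm_pow]
  gcongr
  exact (le_add_of_nonneg_left k.cast_nonneg).trans (natCast_add_re_le_norm k a)

lemma hasSum_lerchPhi1 {a x : ℂ} (ha : 0 < a.re) (hx : ‖x‖ < 1) :
    HasSum (fun k : ℕ => x ^ k / ((k : ℂ) + a)) (lerchPhi1 x a) :=
  (summable_norm_pow_div_natCast_add ha hx).of_norm.hasSum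

lemma hasSum_Hc_mul_pow {a x : ℂ} (ha : 0 < a.re) (hx : ‖x‖ < 1) :
    HasSum (fun n : ℕ => Hc a n * x ^ n) (lerchPhi1 x a / (1 - x)) := by
  have hg : Summable fun n : ℕ => ‖x ^ n‖ := by
    simpa only [norm_pow] using summable_geometric_of_lt_one (norm_nonneg x) hx
  have h := hasSum_sum_range_mul_of_summable_norm (summable_norm_pow_div_natCast_add ha hx) hg
  rw [tsum_geometric_of_norm_lt_one hx, ← div_eq_mul_inv] at h
  refine h.congr_fun fun n => ?_
  rw [Hc, Finset.sum_mul]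
  refine Finset.sum_congr rfl fun k hk => ?_
  rw [div_mul_eq_mul_div, div_mul_eq_mul_div, ← pow_add,
    Nat.add_sub_cancel' (Finset.mem_range_succ_iff.mp hk), one_mul]

lemma ofReal_mul_lerchPhi1_one {x : ℝ} (hx : |x| < 1) :
    (x : ℂ) * lerchPhi1 x 1 = -(Real.log (1 - x) : ℂ) := by
  have h := (Real.hasSum_pow_div_log_of_abs_lt_one hx).mapL Complex.ofRealCLM
  simp only [Complex.ofRealCLM_apply] at h
  push_cast at h
  exact ((hasSum_lerchPhi1 (by simp) (by simpa using hx)).mul_left (x : ℂ)).unique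
    (h.congr_fun fun n => by ring)

lemma Hc_one (n : ℕ) : Hc 1 n = Hnum (n + 1) := by
  simp [Hc, Hnum]

lemma zetaHnat_eq_zetaHc_one (s : ℂ) : zetaHnat s = zetaHc s 1 := by
  simp only [zetaHnat, zetaHc, Hc_one]

lemma summable_one_div_natCast_add_rpow {c q : ℝ} (hc : 0 < c) (hq : 1 < q) :
    Summable fun k : ℕ => 1 / ((k : ℝ) + c) ^ q :=
  ((Real.summable_one_div_nat_add_rpow c q).2 hq).congr fun k => by
    rw [abs_of_pos (by positivity)]

lemma norm_Hc_le {a : ℂ} (ha : 0 < a.re) (n : ℕ) :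
    ‖Hc a n‖ ≤ ∑ k ∈ Finset.range (n + 1), 1 / ((k : ℝ) + a.re) := by
  refine (norm_sum_le _ _).trans (Finset.sum_le_sum fun k _ => ?_)
  rw [norm_div, norm_one]
  exact one_div_le_one_div_of_le (by positivity) (natCast_add_re_le_norm k a)

lemma sum_range_one_div_natCast_add_le {c ε : ℝ} (hc : 0 < c) (hε : 0 < ε) (n : ℕ) :
    ∑ k ∈ Finset.range (n + 1), 1 / ((k : ℝ) + c)
      ≤ ((n : ℝ) + c) ^ ε * ∑' k : ℕ, 1 / ((k : ℝ) + c) ^ (1 + ε) := by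
  have hterm : ∀ k ∈ Finset.range (n + 1),
      1 / ((k : ℝ) + c) ≤ ((n : ℝ) + c) ^ ε * (1 / ((k : ℝ) + c) ^ (1 + ε)) := fun k hk => by
    have hpos : 0 < (k : ℝ) + c := by positivity
    calc 1 / ((k : ℝ) + c) = ((k : ℝ) + c) ^ ε * (1 / ((k : ℝ) + c) ^ (1 + ε)) := by
          rw [Real.rpow_add hpos, Real.rpow_one]
          field_simp
      _ ≤ ((n : ℝ) + c) ^ ε * (1 / ((k : ℝ) + c) ^ (1 + ε)) := by
          gcongr
          exact_mod_cast Finset.mem_range_succ_iff.mp hk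
  calc ∑ k ∈ Finset.range (n + 1), 1 / ((k : ℝ) + c)
      ≤ ((n : ℝ) + c) ^ ε * ∑ k ∈ Finset.range (n + 1), 1 / ((k : ℝ) + c) ^ (1 + ε) := by
        rw [Finset.mul_sum]
        exact Finset.sum_le_sum hterm
    _ ≤ ((n : ℝ) + c) ^ ε * ∑' k : ℕ, 1 / ((k : ℝ) + c) ^ (1 + ε) := by
        gcongr
        exact Summable.sum_le_tsum _ (fun _ _ => by positivity)
          (summable_one_div_natCast_add_rpow hc (by linarith))

lemma summable_norm_Hc_div_rpow {a : ℂ} (ha : 0 < a.re) {σ : ℝ} (hσ : 1 < σ) :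
    Summable fun n : ℕ => ‖Hc a n‖ / ((n : ℝ) + a.re) ^ σ := by
  obtain ⟨ε, hε, hσε⟩ : ∃ ε : ℝ, 0 < ε ∧ 1 < σ - ε := ⟨(σ - 1) / 2, by linarith, by linarith⟩
  set M := ∑' k : ℕ, 1 / ((k : ℝ) + a.re) ^ (1 + ε)
  refine .of_nonneg_of_le (fun n => by positivity) (fun n => ?_)
    ((summable_one_div_natCast_add_rpow ha hσε).mul_left M)
  have hn : 0 < (n : ℝ) + a.re := by positivity
  calc ‖Hc a n‖ / ((n : ℝ) + a.re) ^ σ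
      ≤ ((n : ℝ) + a.re) ^ ε * M / ((n : ℝ) + a.re) ^ σ := by
        gcongr
        exact (norm_Hc_le ha n).trans (sum_range_one_div_natCast_add_le ha hε n)
    _ = M * (1 / ((n : ℝ) + a.re) ^ (σ - ε)) := by
        rw [Real.rpow_sub hn]
        field_simp

lemma hasSum_Hc_mul_cexp {a : ℂ} (ha : 0 < a.re) {t : ℝ} (ht : 0 < t) :
    HasSum (fun n : ℕ => Hc a n * cexp (-(((n : ℂ) + a) * t)))
      (cexp (-(a * t)) * lerchPhi1 (cexp (-t)) a / (1 - cexp (-t))) := by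
  have hx : ‖cexp (-t)‖ < 1 := by simpa [norm_exp] using ht
  rw [mul_div_assoc]
  refine ((hasSum_Hc_mul_pow ha hx).mul_left (cexp (-(a * t)))).congr_fun fun n => ?_
  rw [← exp_nat_mul, mul_left_comm, ← exp_add]
  ring_nf

lemma Gamma_mul_zetaHc_sub_zetaHc {a b s : ℂ} (ha : 0 < a.re) (hb : 0 < b.re) (hs : 1 < s.re) :
    Gamma s * (zetaHc s a - zetaHc s b) = mellin (fun x : ℝ =>
      (cexp (-(a * x)) * lerchPhi1 (cexp (-x)) a - cexp (-(b * x)) * lerchPhi1 (cexp (-x)) b)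
        / (1 - cexp (-x))) s := by
  -- Both series go into one family over `ℕ ⊕ ℕ`, so that the interchange of sum and integral is
  -- done once for the difference and the two Mellin integrands need not be integrable separately.
  let c : ℕ ⊕ ℕ → ℂ := Sum.elim (Hc a) fun n => -Hc b n
  let p : ℕ ⊕ ℕ → ℂ := Sum.elim (fun n => (n : ℂ) + a) fun n => (n : ℂ) + b
  have hp : ∀ i, 0 < (p i).re := by
    rintro (n | n) <;> simp only [p, Sum.elim_inl, Sum.elim_inr, add_re, natCast_re] <;> positivity
  have h_sum : Summable fun i => ‖c i‖ / (p i).re ^ s.re := by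
    refine .sum _ ?_ ?_ <;> simp only [c, p, Function.comp_def, Sum.elim_inl, Sum.elim_inr,
      norm_neg, add_re, natCast_re]
    exacts [summable_norm_Hc_div_rpow ha hs, summable_norm_Hc_div_rpow hb hs]
  have key := hasSum_mellin_cexp hp (by linarith) (c := c)
    (fun t ht => (hasSum_Hc_mul_cexp ha ht).sum ((hasSum_Hc_mul_cexp hb ht).neg.congr_fun
      fun n => neg_mul _ _)) h_sum
  have h_summable := key.summable
  convert key.tsum_eq using 1
  · rw [(h_summable.comp_injective Sum.inl_injective).tsum_sum
      (h_summable.comp_injective Sum.inr_injective)]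
    simp only [c, p, Sum.elim_inl, Sum.elim_inr, mul_neg, neg_div, tsum_neg,
      mul_div_assoc, tsum_mul_left, zetaHc]
    ring
  · simp_rw [sub_div, sub_eq_add_neg (_ / _)]

end

theorem stmt9 (a : ℂ) (ha : 0 < a.re) (s : ℂ) (hs : 1 < s.re) :
    zetaHc s a = zetaHnat s + (1 / Complex.Gamma s) * ∫ x in Set.Ioi (0 : ℝ),
      (x : ℂ) ^ (s - 1) *
        (Complex.exp (-(a * (x : ℂ))) * lerchPhi1 (Complex.exp (-(x : ℂ))) a
          + ((Real.log (1 - Real.exp (-x)) : ℝ) : ℂ))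
        / (1 - Complex.exp (-(x : ℂ))) := by
  have h_log : ∀ x : ℝ, 0 < x → Complex.exp (-(1 * x)) * lerchPhi1 (Complex.exp (-x)) 1
      = -(Real.log (1 - Real.exp (-x)) : ℂ) := fun x hx => by
    have hx' : |Real.exp (-x)| < 1 := by
      rw [abs_of_pos (Real.exp_pos _), Real.exp_lt_one_iff]
      linarith
    simpa [Complex.ofReal_exp] using ofReal_mul_lerchPhi1_one hx'
  have h_integral : ∫ x in Set.Ioi (0 : ℝ), (x : ℂ) ^ (s - 1) *
      (Complex.exp (-(a * (x : ℂ))) * lerchPhi1 (Complex.exp (-(x : ℂ))) a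
        + ((Real.log (1 - Real.exp (-x)) : ℝ) : ℂ)) / (1 - Complex.exp (-(x : ℂ)))
      = Complex.Gamma s * (zetaHc s a - zetaHc s 1) := by
    rw [Gamma_mul_zetaHc_sub_zetaHc ha (by simp) hs, mellin]
    refine setIntegral_congr_fun measurableSet_Ioi fun x hx => ?_
    rw [smul_eq_mul, h_log x hx]
    ring
  rw [zetaHnat_eq_zetaHc_one, h_integral, one_div,
    inv_mul_cancel_left₀ (Complex.Gamma_ne_zero_of_re_pos (by linarith))]
  ring
end

section
/- With J(v) = (1/Γ(v)) ∫_0^∞ x^{v−1} e^{−x} log( (1−e^{−x})/x ) / (1 − e^{−x}) dx, one has J(1) = γ(1) + ( γ^2 − ζ(2) )/2, where γ is the Euler–Mascheroni constant, γ(1) is the first Stieltjes constant, and ζ(2) = π^2/6. -/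
/-!
Expanding `e^{-x} / (1 - e^{-x}) = ∑_{n ≥ 1} e^{-n x}` turns `J(1)` into
`∑_{n ≥ 1} ∫_0^∞ e^{-n x} (log (1 - e^{-x}) - log x) dx`; all these integrands have one sign, so
the interchange of sum and integral is justified as soon as the partial sums converge.
Differentiating the Gamma integral at `1` gives `∫_0^∞ e^{-n x} log x dx = -(γ + log n) / n`, and
expanding `log (1 - e^{-x})` in powers of `e^{-x}` gives
`∫_0^∞ e^{-n x} log (1 - e^{-x}) dx = -∑_{m ≥ 1} 1 / (m (m + n)) = -H_n / n`.
Hence `J(1) = ∑_n (γ + log n - H_n) / n`. Since `∑_{n ≤ N} H_n / n = (H_N ^ 2 + ∑_{n ≤ N} 1 / n ^ 2) / 2`,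
writing `H_N = log N + γ + ε_N` with `0 ≤ ε_N ≤ 1 / N`, the `N`-th partial sum is
`(∑_{n ≤ N} log n / n - log² N / 2) + γ² / 2 - (∑_{n ≤ N} 1 / n ^ 2) / 2 - ε_N (ε_N / 2 + log N)`.
-/

open Filter Finset MeasureTheory

/-- `J(v) = (1/Γ(v)) ∫_0^∞ x^{v-1} e^{-x} log((1-e^{-x})/x) / (1-e^{-x}) dx`. -/
noncomputable def Jfun (v : ℝ) : ℝ :=
  (1 / Real.Gamma v) * ∫ x in Set.Ioi (0 : ℝ),
    x ^ (v - 1) * Real.exp (-x) * Real.log ((1 - Real.exp (-x)) / x) / (1 - Real.exp (-x))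

open Real Set
open scoped Topology

local notation "γ" => eulerMascheroniConstant

theorem hasSum_integral_of_nonneg {ι α : Type*} [Countable ι] [MeasurableSpace α]
    {μ : Measure α} {F : ι → α → ℝ} (hF_int : ∀ i, Integrable (F i) μ)
    (hF_nonneg : ∀ i, 0 ≤ᵐ[μ] F i) (hF_sum : Summable fun i ↦ ∫ a, F i a ∂μ) :
    HasSum (fun i ↦ ∫ a, F i a ∂μ) (∫ a, ∑' i, F i a ∂μ) :=
  hasSum_integral_of_summable_integral_norm hF_int <| hF_sum.congr fun i ↦
    integral_congr_ae <| (hF_nonneg i).mono fun _ ha ↦ (Real.norm_of_nonneg ha).symm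

theorem hasSum_sub_add_of_antitone {a : ℕ → ℝ} (ha : Antitone a)
    (ha_lim : Tendsto a atTop (𝓝 0)) (n : ℕ) :
    HasSum (fun m ↦ a m - a (m + n)) (∑ i ∈ range n, a i) := by
  have partial_sum (M : ℕ) : ∑ m ∈ range M, (a m - a (m + n))
      = ∑ i ∈ range n, a i - ∑ i ∈ range n, a (M + i) := by
    have h₁ := sum_range_add a M n
    have h₂ := sum_range_add a n M
    rw [add_comm n M] at h₂
    simp only [sum_sub_distrib, add_comm _ n]
    linarith
  rw [hasSum_iff_tendsto_nat_of_nonneg (fun m ↦ sub_nonneg.mpr (ha (m.le_add_right n)))]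
  simp only [partial_sum]
  simpa using tendsto_const_nhds.sub <| tendsto_finsetSum (range n) fun i _ ↦
    ha_lim.comp (tendsto_add_atTop_nat i)

theorem harmonic_eq_sum_range_inv (n : ℕ) :
    (harmonic n : ℝ) = ∑ i ∈ range n, ((i : ℝ) + 1)⁻¹ := by
  simp [harmonic]

theorem hasSum_inv_succ_mul_succ_add {n : ℕ} (hn : n ≠ 0) :
    HasSum (fun m : ℕ ↦ ((m + 1 : ℝ) * (m + 1 + n))⁻¹) (harmonic n / n) := by
  have h := (hasSum_sub_add_of_antitone (a := fun m : ℕ ↦ ((m + 1 : ℝ))⁻¹)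
    (fun i j hij ↦ inv_anti₀ (by positivity) (by gcongr))
    (tendsto_inv_atTop_zero.comp (tendsto_natCast_atTop_atTop.atTop_add tendsto_const_nhds))
    n).div_const n
  rw [harmonic_eq_sum_range_inv]
  refine h.congr_fun fun m ↦ ?_
  push_cast
  field_simp
  ring

theorem hasSum_inv_succ_sq : HasSum (fun n : ℕ ↦ ((n + 1 : ℝ) ^ 2)⁻¹) (π ^ 2 / 6) := by
  simpa using (hasSum_nat_add_iff' 1).mpr hasSum_zeta_two

theorem sum_range_harmonic_div (N : ℕ) :
    ∑ k ∈ range N, (harmonic (k + 1) : ℝ) / (k + 1)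
      = ((harmonic N : ℝ) ^ 2 + ∑ k ∈ range N, ((k + 1 : ℝ) ^ 2)⁻¹) / 2 := by
  induction N with
  | zero => simp
  | succ N ih =>
    rw [sum_range_succ, ih, sum_range_succ, harmonic_succ]
    push_cast
    field_simp
    ring

theorem harmonic_sub_log_sub_eulerMascheroniConstant_mem_Icc {n : ℕ} (hn : n ≠ 0) :
    harmonic n - log n - γ ∈ Icc 0 (n : ℝ)⁻¹ := by
  have lower := eulerMascheroniConstant_lt_eulerMascheroniSeq' n
  have upper := eulerMascheroniSeq_lt_eulerMascheroniConstant n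
  rw [eulerMascheroniSeq', if_neg hn] at lower
  rw [eulerMascheroniSeq] at upper
  have log_succ : log (n + 1) - log n ≤ (n : ℝ)⁻¹ := by
    have hn' : (0 : ℝ) < n := by positivity
    rw [← log_div (by positivity) hn'.ne']
    calc log ((n + 1) / n) ≤ (n + 1) / n - 1 := log_le_sub_one_of_pos (by positivity)
      _ = (n : ℝ)⁻¹ := by field_simp; ring
  constructor <;> linarith

theorem tendsto_log_mul_harmonic_sub_log_sub_eulerMascheroniConstant :
    Tendsto (fun N : ℕ ↦ log N * (harmonic N - log N - γ)) atTop (𝓝 0) := by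
  have log_div : Tendsto (fun N : ℕ ↦ log N / N) atTop (𝓝 0) :=
    (isLittleO_log_id_atTop.tendsto_div_nhds_zero).comp tendsto_natCast_atTop_atTop
  refine squeeze_zero' ?_ ?_ log_div
  · filter_upwards [eventually_ne_atTop 0] with N hN
    exact mul_nonneg (log_natCast_nonneg N)
      (harmonic_sub_log_sub_eulerMascheroniConstant_mem_Icc hN).1
  · filter_upwards [eventually_ne_atTop 0] with N hN
    rw [div_eq_mul_inv]
    exact mul_le_mul_of_nonneg_left
      (harmonic_sub_log_sub_eulerMascheroniConstant_mem_Icc hN).2 (log_natCast_nonneg N)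

theorem tendsto_sum_eulerMascheroniConstant_add_log_sub_harmonic_div {γ₁ : ℝ}
    (hγ₁ : Tendsto (fun N : ℕ ↦ ∑ k ∈ Icc 1 N, log k / k - log N ^ 2 / 2) atTop (𝓝 γ₁)) :
    Tendsto (fun N : ℕ ↦ ∑ k ∈ range N,
        (γ + log (k + 1) - harmonic (k + 1)) / (k + 1))
      atTop (𝓝 (γ₁ + (γ ^ 2 - π ^ 2 / 6) / 2)) := by
  set ε : ℕ → ℝ := fun N ↦ harmonic N - log N - γ
  have partial_sum (N : ℕ) : ∑ k ∈ range N, (γ + log (k + 1) - harmonic (k + 1)) / (k + 1)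
      = (∑ k ∈ Icc 1 N, log k / k - log N ^ 2 / 2) + γ ^ 2 / 2 - ε N ^ 2 / 2 - log N * ε N
        - (∑ k ∈ range N, ((k + 1 : ℝ) ^ 2)⁻¹) / 2 := by
    have Icc_eq : ∑ k ∈ Icc 1 N, log k / k = ∑ k ∈ range N, log (k + 1) / (k + 1 : ℝ) := by
      have shift := sum_Ico_add' (fun k : ℕ ↦ log k / k) 0 N 1
      push_cast at shift
      rw [range_eq_Ico, shift]
      rfl
    have sum_eq : ∑ k ∈ range N, (γ + log (k + 1) - harmonic (k + 1)) / (k + 1)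
        = γ * harmonic N + ∑ k ∈ Icc 1 N, log k / k
          - ∑ k ∈ range N, (harmonic (k + 1) : ℝ) / (k + 1) := by
      rw [Icc_eq, harmonic_eq_sum_range_inv, mul_sum, ← sum_add_distrib, ← sum_sub_distrib]
      refine sum_congr rfl fun k _ ↦ ?_
      ring
    rw [sum_eq, sum_range_harmonic_div]
    ring
  have hε : Tendsto ε atTop (𝓝 0) := by
    simpa using tendsto_harmonic_sub_log.sub_const γ
  have := ((hγ₁.add_const (γ ^ 2 / 2)).sub ((hε.pow 2).div_const 2)).sub
    tendsto_log_mul_harmonic_sub_log_sub_eulerMascheroniConstant |>.sub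
    (hasSum_inv_succ_sq.tendsto_sum_nat.div_const 2)
  convert this using 2 with N
  · exact partial_sum N
  · ring

theorem integral_exp_neg_mul_log : ∫ x in Ioi 0, exp (-x) * log x = -γ := by
  have integral_eq : ∫ t : ℝ in Ioi 0, (t : ℂ) ^ ((1 : ℂ) - 1) * (log t * exp (-t))
      = ((∫ x in Ioi 0, exp (-x) * log x : ℝ) : ℂ) := by
    rw [← integral_complex_ofReal]
    refine setIntegral_congr_fun measurableSet_Ioi fun t _ ↦ ?_
    simp [mul_comm]
  have hΓ : HasDerivAt Complex.Gamma ((∫ x in Ioi 0, exp (-x) * log x : ℝ) : ℂ) (1 : ℝ) := by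
    rw [← integral_eq, Complex.ofReal_one]
    refine (Complex.hasDerivAt_GammaIntegral (by norm_num)).congr_of_eventuallyEq ?_
    filter_upwards [(isOpen_lt continuous_const Complex.continuous_re).mem_nhds
      (by norm_num : (0 : ℝ) < (1 : ℂ).re)] with s hs using Complex.Gamma_eq_integral hs
  exact hΓ.real_of_complex.unique hasDerivAt_Gamma_one

theorem integrableOn_exp_neg_mul_log : IntegrableOn (fun x ↦ exp (-x) * log x) (Ioi 0) :=
  .of_integral_ne_zero <| by
    rw [integral_exp_neg_mul_log, neg_ne_zero]
    exact (one_half_pos.trans one_half_lt_eulerMascheroniConstant).ne'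

theorem integral_exp_neg_mul_Ioi {k : ℝ} (hk : 0 < k) :
    ∫ x in Ioi 0, exp (-k * x) = k⁻¹ := by
  simpa [neg_mul, ← div_neg_eq_neg_div] using integral_exp_mul_Ioi (neg_neg_of_pos hk) 0

theorem integrableOn_exp_neg_mul_mul_log {k : ℝ} (hk : 0 < k) :
    IntegrableOn (fun x ↦ exp (-k * x) * log x) (Ioi 0) := by
  have rescaled : IntegrableOn (fun x ↦ exp (-(k * x)) * (log (k * x) - log k)) (Ioi 0) := by
    refine (integrableOn_Ioi_comp_mul_left_iff (fun y ↦ exp (-y) * (log y - log k)) 0 hk).mpr ?_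
    simp_rw [mul_zero, mul_sub]
    exact integrableOn_exp_neg_mul_log.sub ((integrableOn_exp_neg_Ioi 0).mul_const _)
  refine rescaled.congr_fun (fun x (hx : 0 < x) ↦ ?_) measurableSet_Ioi
  dsimp only
  rw [log_mul hk.ne' hx.ne', neg_mul]
  ring

theorem integral_exp_neg_mul_mul_log {k : ℝ} (hk : 0 < k) :
    ∫ x in Ioi 0, exp (-k * x) * log x = -(γ + log k) / k := by
  have rescale := integral_comp_mul_left_Ioi (fun y ↦ exp (-y) * (log y - log k)) 0 hk
  simp only [mul_zero, smul_eq_mul] at rescale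
  calc ∫ x in Ioi 0, exp (-k * x) * log x
      = ∫ x in Ioi 0, exp (-(k * x)) * (log (k * x) - log k) :=
        setIntegral_congr_fun measurableSet_Ioi fun x (hx : 0 < x) ↦ by
          rw [log_mul hk.ne' hx.ne', neg_mul]
          ring
    _ = k⁻¹ * ∫ y in Ioi 0, (exp (-y) * log y - exp (-y) * log k) := by
        simp_rw [rescale, mul_sub]
    _ = -(γ + log k) / k := by
        rw [integral_sub integrableOn_exp_neg_mul_log
          ((integrableOn_exp_neg_Ioi 0).mul_const _), integral_mul_const,
          integral_exp_neg_mul_log, integral_exp_neg_Ioi_zero]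
        field_simp
        ring

theorem hasSum_integral_exp_neg_mul_mul_log_one_sub_exp_neg {k : ℝ} (hk : 0 < k) :
    HasSum (fun m : ℕ ↦ ((m + 1 : ℝ) * (m + 1 + k))⁻¹)
      (-∫ x in Ioi 0, exp (-k * x) * log (1 - exp (-x))) := by
  set F : ℕ → ℝ → ℝ := fun m x ↦ exp (-(m + 1 + k) * x) / (m + 1)
  have integral_F (m : ℕ) : ∫ x in Ioi 0, F m x = ((m + 1 : ℝ) * (m + 1 + k))⁻¹ := by
    rw [integral_div, integral_exp_neg_mul_Ioi (by positivity)]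
    field_simp
  have series (x : ℝ) (hx : 0 < x) :
      HasSum (fun m ↦ F m x) (-(exp (-k * x) * log (1 - exp (-x)))) := by
    have h := (hasSum_pow_div_log_of_abs_lt_one (x := exp (-x)) ?_).mul_left (exp (-k * x))
    · rw [mul_neg] at h
      refine h.congr_fun fun m ↦ ?_
      rw [← exp_nat_mul, mul_div_assoc', ← exp_add]
      simp only [F]
      push_cast
      ring_nf
    · rwa [abs_of_pos (exp_pos _), exp_lt_one_iff, neg_lt_zero]
  have h := hasSum_integral_of_nonneg (μ := volume.restrict (Ioi 0)) (F := F)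
    (fun m ↦ (exp_neg_integrableOn_Ioi 0 (by positivity)).div_const _)
    (fun m ↦ .of_forall fun x ↦ by positivity)
    (hasSum_inv_succ_sq.summable.of_nonneg_of_le (fun m ↦ by rw [integral_F]; positivity)
      fun m ↦ by rw [integral_F, sq]; exact inv_anti₀ (by positivity) (by nlinarith))
  rw [setIntegral_congr_fun measurableSet_Ioi fun x hx ↦ (series x hx).tsum_eq,
    integral_neg] at h
  exact h.congr_fun fun m ↦ (integral_F m).symm

theorem integrableOn_exp_neg_mul_mul_log_one_sub_exp_neg {k : ℝ} (hk : 0 < k) :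
    IntegrableOn (fun x ↦ exp (-k * x) * log (1 - exp (-x))) (Ioi 0) := by
  have h := hasSum_integral_exp_neg_mul_mul_log_one_sub_exp_neg hk
  refine .of_integral_ne_zero fun h_zero ↦ ?_
  rw [h_zero, neg_zero] at h
  exact (h.summable.tsum_pos (fun m ↦ by positivity) 0 (by positivity)).ne' h.tsum_eq

theorem integral_exp_neg_mul_mul_log_one_sub_exp_neg {n : ℕ} (hn : n ≠ 0) :
    ∫ x in Ioi 0, exp (-n * x) * log (1 - exp (-x)) = -harmonic n / n := by
  rw [neg_div, ← (hasSum_integral_exp_neg_mul_mul_log_one_sub_exp_neg (by positivity)).unique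
    (hasSum_inv_succ_mul_succ_add hn), neg_neg]

theorem integral_exp_neg_mul_mul_log_sub_log_one_sub_exp_neg {n : ℕ} (hn : n ≠ 0) :
    ∫ x in Ioi 0, exp (-n * x) * (log x - log (1 - exp (-x))) = (harmonic n - log n - γ) / n := by
  have hn' : (0 : ℝ) < n := by positivity
  simp_rw [mul_sub]
  rw [integral_sub (integrableOn_exp_neg_mul_mul_log hn')
      (integrableOn_exp_neg_mul_mul_log_one_sub_exp_neg hn'),
    integral_exp_neg_mul_mul_log hn', integral_exp_neg_mul_mul_log_one_sub_exp_neg hn]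
  ring

theorem integrableOn_exp_neg_mul_mul_log_sub_log_one_sub_exp_neg {k : ℝ} (hk : 0 < k) :
    IntegrableOn (fun x ↦ exp (-k * x) * (log x - log (1 - exp (-x)))) (Ioi 0) := by
  simp_rw [mul_sub]
  exact (integrableOn_exp_neg_mul_mul_log hk).sub
    (integrableOn_exp_neg_mul_mul_log_one_sub_exp_neg hk)

theorem log_one_sub_exp_neg_le_log {x : ℝ} (hx : 0 < x) : log (1 - exp (-x)) ≤ log x :=
  log_le_log (sub_pos.mpr (exp_lt_one_iff.mpr (neg_neg_of_pos hx)))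
    (by linarith [one_sub_le_exp_neg x])

theorem hasSum_exp_neg_succ_mul {x : ℝ} (hx : 0 < x) :
    HasSum (fun k : ℕ ↦ exp (-(k + 1 : ℕ) * x)) (exp (-x) / (1 - exp (-x))) := by
  have h := (hasSum_geometric_of_lt_one (exp_pos (-x)).le
    (exp_lt_one_iff.mpr (neg_neg_of_pos hx))).mul_left (exp (-x))
  refine h.congr_fun fun k ↦ ?_
  rw [← exp_nat_mul, ← exp_add]
  push_cast
  ring_nf

theorem Jfun_one_eq_neg_integral_tsum :
    Jfun 1 = -∫ x in Ioi 0, ∑' k : ℕ, exp (-(k + 1 : ℕ) * x) * (log x - log (1 - exp (-x))) := by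
  rw [Jfun, Gamma_one, div_one, one_mul, ← integral_neg]
  refine setIntegral_congr_fun measurableSet_Ioi fun x (hx : 0 < x) ↦ ?_
  rw [tsum_mul_right, (hasSum_exp_neg_succ_mul hx).tsum_eq, sub_self, rpow_zero, one_mul,
    log_div (sub_pos.mpr (exp_lt_one_iff.mpr (neg_neg_of_pos hx))).ne' hx.ne']
  ring

theorem stmt16 (γ1 : ℝ)
    -- the first Stieltjes constant `γ(1)`
    (hγ1 : Tendsto
      (fun N : ℕ =>
        (∑ k ∈ Finset.Icc 1 N, Real.log (k : ℝ) / (k : ℝ)) - Real.log (N : ℝ) ^ 2 / 2)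
      atTop (nhds γ1)) :
    Jfun 1 = γ1 + (Real.eulerMascheroniConstant ^ 2 - Real.pi ^ 2 / 6) / 2 := by
  rw [Jfun_one_eq_neg_integral_tsum]
  set F : ℕ → ℝ → ℝ := fun k x ↦ exp (-(k + 1 : ℕ) * x) * (log x - log (1 - exp (-x)))
  have hF_nonneg (k : ℕ) : 0 ≤ᵐ[volume.restrict (Ioi 0)] F k := by
    filter_upwards [ae_restrict_mem measurableSet_Ioi] with x hx
    exact mul_nonneg (exp_pos _).le (sub_nonneg.mpr (log_one_sub_exp_neg_le_log hx))
  have hF_integral (k : ℕ) :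
      ∫ x in Ioi 0, F k x = -((γ + log (k + 1) - harmonic (k + 1)) / (k + 1)) := by
    rw [integral_exp_neg_mul_mul_log_sub_log_one_sub_exp_neg k.succ_ne_zero]
    push_cast
    ring
  have hF_sum : HasSum (fun k ↦ ∫ x in Ioi 0, F k x) (-(γ1 + (γ ^ 2 - π ^ 2 / 6) / 2)) := by
    rw [hasSum_iff_tendsto_nat_of_nonneg fun k ↦ integral_nonneg_of_ae (hF_nonneg k)]
    simpa only [hF_integral, sum_neg_distrib] using
      (tendsto_sum_eulerMascheroniConstant_add_log_sub_harmonic_div hγ1).neg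
  have hF_int (k : ℕ) : IntegrableOn (F k) (Ioi 0) :=
    integrableOn_exp_neg_mul_mul_log_sub_log_one_sub_exp_neg (by positivity)
  rw [(hasSum_integral_of_nonneg hF_int hF_nonneg hF_sum.summable).unique hF_sum, neg_neg]
end

section
/- For every complex x and every complex z with 0 < |z| < 2π, ( z e^{xz}/(e^z − 1) ) · L(z) = Σ_{n=1}^∞ A_n(x) z^n with A_n(x) = (1/n!) Σ_{k=1}^n C(n,k) (1/k) B_{n−k}(x) B_k(1), where L(z) denotes the unique function analytic on |z| < 2π with L(0) = 0 satisfying e^{L(z)} = (e^z − 1)/z, and the series converges. -/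
/-!
Write `G(w) = (e^w - 1)/w`, i.e. `dslope exp 0`, so that `z e^{xz}/(e^z - 1) = e^{xz}/G(z)` and
`L = log G`. Both factors are holomorphic on `|w| < 2π`, where `G` has no zeros, so their product
is the sum of its Taylor series at `0` there, and Taylor series at `0` multiply as formal power
series. Since `w G(w) = e^w - 1`, the Bernoulli generating function identifies the Taylor series
of `e^{xw}/G(w)` as `∑ B_n(x) w^n/n!`. Differentiating `e^L = G` gives
`w L'(w) = w G'(w)/G(w) = e^w/G(w) - 1 = ∑_{k ≥ 1} B_k(1) w^k/k!`, hence
`L(w) = ∑_{k ≥ 1} B_k(1) w^k/(k k!)`, and the Cauchy product of the two series has coefficients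
`A_n(x)`.
-/

open Filter Topology PowerSeries
open scoped Nat ContDiff

noncomputable def Acoef (n : ℕ) (x : ℂ) : ℂ :=
  (1 / (Nat.factorial n : ℂ)) * ∑ k ∈ Finset.Icc 1 n,
    (n.choose k : ℂ) * (1 / (k : ℂ))
      * (Polynomial.aeval x (Polynomial.bernoulli (n - k)))
      * (Polynomial.aeval (1 : ℂ) (Polynomial.bernoulli k))

section FormalTaylorSeries

variable {𝕜 : Type*} [NontriviallyNormedField 𝕜] {f g : 𝕜 → 𝕜}

noncomputable def formalTaylorSeries (f : 𝕜 → 𝕜) : 𝕜⟦X⟧ :=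
  PowerSeries.mk fun n => iteratedDeriv n f 0 / n !

theorem coeff_formalTaylorSeries (f : 𝕜 → 𝕜) (n : ℕ) :
    coeff n (formalTaylorSeries f) = iteratedDeriv n f 0 / n ! :=
  coeff_mk _ _

theorem constantCoeff_formalTaylorSeries (f : 𝕜 → 𝕜) :
    constantCoeff (formalTaylorSeries f) = f 0 := by
  simp [← coeff_zero_eq_constantCoeff_apply, coeff_formalTaylorSeries]

theorem Filter.EventuallyEq.formalTaylorSeries_eq (h : f =ᶠ[𝓝 0] g) :
    formalTaylorSeries f = formalTaylorSeries g := by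
  ext n
  simp only [coeff_formalTaylorSeries, h.iteratedDeriv_eq n]

theorem formalTaylorSeries_mul [CharZero 𝕜] (hf : ContDiffAt 𝕜 ∞ f 0)
    (hg : ContDiffAt 𝕜 ∞ g 0) :
    formalTaylorSeries (f * g) = formalTaylorSeries f * formalTaylorSeries g := by
  ext n
  rw [coeff_formalTaylorSeries, iteratedDeriv_mul (hf.of_le (mod_cast le_top))
    (hg.of_le (mod_cast le_top)), coeff_mul,
    Finset.Nat.sum_antidiagonal_eq_sum_range_succ (fun i j => coeff i _ * coeff j _),
    Finset.sum_div]
  refine Finset.sum_congr rfl fun i hi => ?_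
  rw [coeff_formalTaylorSeries, coeff_formalTaylorSeries,
    Nat.cast_choose 𝕜 (Nat.lt_succ_iff.mp (Finset.mem_range.mp hi))]
  have : (n ! : 𝕜) ≠ 0 := by exact_mod_cast n.factorial_ne_zero
  field_simp

theorem formalTaylorSeries_sub (hf : ContDiffAt 𝕜 ∞ f 0) (hg : ContDiffAt 𝕜 ∞ g 0) :
    formalTaylorSeries (f - g) = formalTaylorSeries f - formalTaylorSeries g := by
  ext n
  simp only [map_sub, coeff_formalTaylorSeries, sub_div,
    iteratedDeriv_sub (hf.of_le (mod_cast le_top)) (hg.of_le (mod_cast le_top))]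

theorem formalTaylorSeries_const (c : 𝕜) : formalTaylorSeries (fun _ => c) = C c := by
  ext n
  rcases n with _ | n <;> simp [coeff_formalTaylorSeries, iteratedDeriv_const, coeff_C]

theorem formalTaylorSeries_id : formalTaylorSeries (fun w : 𝕜 => w) = X := by
  ext n
  rw [coeff_formalTaylorSeries, iteratedDeriv_fun_id_zero, coeff_X]
  split_ifs with h <;> simp [h]

theorem formalTaylorSeries_deriv [CharZero 𝕜] (f : 𝕜 → 𝕜) :
    formalTaylorSeries (deriv f) = d⁄dX 𝕜 (formalTaylorSeries f) := by
  ext n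
  rw [coeff_derivative, coeff_formalTaylorSeries, coeff_formalTaylorSeries, ← iteratedDeriv_succ',
    Nat.factorial_succ]
  push_cast
  field_simp

end FormalTaylorSeries

section BernoulliEGF

noncomputable def bernoulliEGF (A : Type*) [CommRing A] [Algebra ℚ A] (t : A) : A⟦X⟧ :=
  PowerSeries.mk fun n => Polynomial.aeval t ((1 / n ! : ℚ) • Polynomial.bernoulli n)

theorem bernoulliEGF_mul_eq_rescale_exp {A : Type*} [CommRing A] [IsDomain A] [Algebra ℚ A]
    (t : A) {g : A⟦X⟧} (hg : X * g = exp A - 1) : bernoulliEGF A t * g = rescale t (exp A) := by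
  apply mul_left_cancel₀ (X_ne_zero (R := A))
  rw [mul_left_comm, hg, bernoulliEGF, Polynomial.bernoulli_generating_function]

theorem coeff_bernoulliEGF {K : Type*} [Field K] [CharZero K] (t : K) (n : ℕ) :
    coeff n (bernoulliEGF K t) = Polynomial.aeval t (Polynomial.bernoulli n) / n ! := by
  rw [bernoulliEGF, coeff_mk, map_smul, Rat.smul_def]
  push_cast
  ring

end BernoulliEGF

section ComplexExp

open Complex

theorem formalTaylorSeries_cexp_const_mul (c : ℂ) :
    formalTaylorSeries (fun w => exp (c * w)) = rescale c (PowerSeries.exp ℂ) := by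
  ext n
  simp [coeff_formalTaylorSeries, coeff_rescale, coeff_exp, div_eq_mul_inv]

theorem differentiable_dslope_cexp : Differentiable ℂ (dslope exp 0) :=
  differentiableOn_univ.1
    ((differentiableOn_dslope univ_mem).2 differentiable_exp.differentiableOn)

theorem dslope_cexp_of_ne {w : ℂ} (hw : w ≠ 0) : dslope exp 0 w = (exp w - 1) / w := by
  rw [dslope_of_ne _ hw, slope_def_field, exp_zero, sub_zero]

theorem cexp_ne_one_of_norm_lt {w : ℂ} (h0 : w ≠ 0) (hw : ‖w‖ < 2 * Real.pi) :
    exp w ≠ 1 := by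
  rw [Ne, exp_eq_one_iff]
  rintro ⟨n, rfl⟩
  have hn : n ≠ 0 := by rintro rfl; simp at h0
  have : 2 * Real.pi ≤ ‖(n : ℂ) * (2 * Real.pi * I)‖ := by
    rw [norm_mul, norm_mul, norm_mul, norm_intCast, norm_I, norm_real, Real.norm_of_nonneg
      Real.pi_pos.le, Complex.norm_two, mul_one]
    exact le_mul_of_one_le_left (by positivity) (by exact_mod_cast Int.one_le_abs hn)
  linarith

theorem dslope_cexp_ne_zero {w : ℂ} (hw : ‖w‖ < 2 * Real.pi) : dslope exp 0 w ≠ 0 := by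
  rcases eq_or_ne w 0 with rfl | h0
  · simp
  · rw [dslope_cexp_of_ne h0]
    exact div_ne_zero (sub_ne_zero.2 (cexp_ne_one_of_norm_lt h0 hw)) h0

theorem X_mul_formalTaylorSeries_dslope_cexp :
    X * formalTaylorSeries (dslope exp 0) = PowerSeries.exp ℂ - 1 := by
  have hmul : (fun w : ℂ => w) * dslope exp 0 = (fun w => exp w) - fun _ => 1 := by
    ext w
    simpa using sub_smul_dslope exp 0 w
  rw [← formalTaylorSeries_id, ← formalTaylorSeries_mul contDiffAt_fun_id
    (differentiable_dslope_cexp.analyticAt 0).contDiffAt, hmul,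
    formalTaylorSeries_sub analyticAt_cexp.contDiffAt contDiffAt_const, formalTaylorSeries_const,
    map_one]
  simpa using formalTaylorSeries_cexp_const_mul 1

theorem formalTaylorSeries_dslope_cexp_ne_zero : formalTaylorSeries (dslope exp 0) ≠ 0 :=
  fun h => by simpa [constantCoeff_formalTaylorSeries] using congrArg constantCoeff h

theorem formalTaylorSeries_cexp_mul_div_dslope (x : ℂ) :
    formalTaylorSeries (fun w => exp (x * w) / dslope exp 0 w) = bernoulliEGF ℂ x := by
  have hG := differentiable_dslope_cexp.analyticAt 0
  have hG0 : dslope exp 0 0 ≠ 0 := by simp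
  have hf : AnalyticAt ℂ (fun w => exp (x * w) / dslope exp 0 w) 0 := by
    fun_prop (disch := exact hG0)
  refine mul_right_cancel₀ formalTaylorSeries_dslope_cexp_ne_zero ?_
  rw [bernoulliEGF_mul_eq_rescale_exp x X_mul_formalTaylorSeries_dslope_cexp,
    ← formalTaylorSeries_mul hf.contDiffAt hG.contDiffAt, ← formalTaylorSeries_cexp_const_mul]
  refine Filter.EventuallyEq.formalTaylorSeries_eq ?_
  filter_upwards [hG.continuousAt.eventually_ne hG0] with w hw
  exact div_mul_cancel₀ _ hw

end ComplexExp

section Logarithm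

open Complex

theorem deriv_eventuallyEq_mul_deriv_of_cexp_comp {L G : ℂ → ℂ} {a : ℂ}
    (hL : ∀ᶠ w in 𝓝 a, DifferentiableAt ℂ L w) (h : exp ∘ L =ᶠ[𝓝 a] G) :
    deriv G =ᶠ[𝓝 a] G * deriv L := by
  filter_upwards [h.deriv, h.eventually_nhds, hL] with w hd he hLw
  rw [← hd, Pi.mul_apply, ← he.self_of_nhds]
  exact hLw.hasDerivAt.cexp.deriv

theorem X_mul_derivative_formalTaylorSeries_of_cexp_comp_eq_dslope {L : ℂ → ℂ}
    (hL : AnalyticAt ℂ L 0) (h : exp ∘ L =ᶠ[𝓝 0] dslope exp 0) :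
    X * d⁄dX ℂ (formalTaylorSeries L) = bernoulliEGF ℂ 1 - 1 := by
  set g := formalTaylorSeries (dslope exp 0)
  have hX : X * g = PowerSeries.exp ℂ - 1 := X_mul_formalTaylorSeries_dslope_cexp
  have hB : bernoulliEGF ℂ 1 * g = PowerSeries.exp ℂ := by
    simpa using bernoulliEGF_mul_eq_rescale_exp 1 hX
  have hDg : d⁄dX ℂ g = g * d⁄dX ℂ (formalTaylorSeries L) := by
    rw [← formalTaylorSeries_deriv, ← formalTaylorSeries_deriv, ← formalTaylorSeries_mul
      (differentiable_dslope_cexp.analyticAt 0).contDiffAt hL.deriv.contDiffAt]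
    refine Filter.EventuallyEq.formalTaylorSeries_eq ?_
    exact deriv_eventuallyEq_mul_deriv_of_cexp_comp
      (hL.eventually_analyticAt.mono fun _ hw => hw.differentiableAt) h
  have hXDg : g + X * d⁄dX ℂ g = PowerSeries.exp ℂ := by
    simpa [Derivation.leibniz, add_comm, derivative_exp] using congrArg (d⁄dX ℂ) hX
  refine mul_right_cancel₀ formalTaylorSeries_dslope_cexp_ne_zero ?_
  calc X * d⁄dX ℂ (formalTaylorSeries L) * g = X * d⁄dX ℂ g := by rw [hDg]; ring
    _ = PowerSeries.exp ℂ - g := by rw [← hXDg]; ring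
    _ = (bernoulliEGF ℂ 1 - 1) * g := by rw [sub_mul, hB, one_mul]

theorem coeff_succ_of_X_mul_derivative_eq_bernoulliEGF {ℓ : ℂ⟦X⟧}
    (h : X * d⁄dX ℂ ℓ = bernoulliEGF ℂ 1 - 1) (k : ℕ) :
    coeff (k + 1) ℓ =
      Polynomial.aeval (1 : ℂ) (Polynomial.bernoulli (k + 1)) / ((k + 1) * (k + 1)!) := by
  have := congrArg (coeff (k + 1)) h
  rw [coeff_succ_X_mul, coeff_derivative, map_sub, coeff_bernoulliEGF, coeff_one,
    if_neg k.succ_ne_zero, sub_zero] at this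
  have hfac : ((k + 1)! : ℂ) ≠ 0 := by exact_mod_cast (k + 1).factorial_ne_zero
  rw [eq_div_iff (mul_ne_zero (Nat.cast_add_one_ne_zero k) hfac), ← mul_assoc, this,
    div_mul_cancel₀ _ hfac]

end Logarithm

theorem coeff_bernoulliEGF_mul_eq_Acoef (x : ℂ) {ℓ : ℂ⟦X⟧} (h0 : constantCoeff ℓ = 0)
    (h : X * d⁄dX ℂ ℓ = bernoulliEGF ℂ 1 - 1) (n : ℕ) :
    coeff n (bernoulliEGF ℂ x * ℓ) = Acoef n x := by
  rw [mul_comm, coeff_mul,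
    Finset.Nat.sum_antidiagonal_eq_sum_range_succ (fun i j => coeff i ℓ * coeff j _),
    Finset.sum_range_succ', coeff_zero_eq_constantCoeff_apply, h0, zero_mul, add_zero, Acoef,
    Finset.mul_sum, Finset.range_eq_Ico,
    Finset.sum_Ico_add' (fun k => coeff k ℓ * coeff (n - k) (bernoulliEGF ℂ x)), zero_add,
    Finset.Ico_add_one_right_eq_Icc]
  refine Finset.sum_congr rfl fun k hk => ?_
  obtain ⟨hk1, hkn⟩ := Finset.mem_Icc.1 hk
  obtain ⟨k, rfl⟩ := Nat.exists_eq_add_of_le' hk1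
  have : (n ! : ℂ) ≠ 0 := by exact_mod_cast n.factorial_ne_zero
  rw [coeff_succ_of_X_mul_derivative_eq_bernoulliEGF h, coeff_bernoulliEGF, Nat.cast_choose ℂ hkn]
  push_cast
  field_simp

theorem hasSum_coeff_formalTaylorSeries_mul_pow {f : ℂ → ℂ} {r : ℝ}
    (hf : DifferentiableOn ℂ f (Metric.ball 0 r)) {z : ℂ} (hz : z ∈ Metric.ball 0 r) :
    HasSum (fun n => coeff n (formalTaylorSeries f) * z ^ n) (f z) := by
  refine (Complex.hasSum_taylorSeries_on_ball hf hz).congr_fun fun n => ?_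
  rw [coeff_formalTaylorSeries, sub_zero, smul_eq_mul, smul_eq_mul]
  ring

theorem stmt18 (x z : ℂ) (hz0 : 0 < ‖z‖) (hz : ‖z‖ < 2 * Real.pi)
    -- `L` is the unique analytic function on `|z| < 2π` with `L(0) = 0` and
    -- `e^{L(z)} = (e^z - 1)/z`
    (L : ℂ → ℂ)
    (hLanal : AnalyticOnNhd ℂ L (Metric.ball (0 : ℂ) (2 * Real.pi)))
    (hL0 : L 0 = 0)
    (hLexp : ∀ w ∈ Metric.ball (0 : ℂ) (2 * Real.pi), w ≠ 0 →
      Complex.exp (L w) = (Complex.exp w - 1) / w) :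
    HasSum (fun n : ℕ => Acoef (n + 1) x * z ^ (n + 1))
      (z * Complex.exp (x * z) / (Complex.exp z - 1) * L z) := by
  set F := fun w => Complex.exp (x * w) / dslope Complex.exp 0 w
  have hball : Metric.ball (0 : ℂ) (2 * Real.pi) ∈ 𝓝 0 :=
    Metric.ball_mem_nhds 0 (by positivity)
  have hL : AnalyticAt ℂ L 0 := hLanal 0 (mem_of_mem_nhds hball)
  have hLG : Complex.exp ∘ L =ᶠ[𝓝 0] dslope Complex.exp 0 := by
    filter_upwards [hball] with w hw
    rcases eq_or_ne w 0 with rfl | hw0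
    · simp [hL0]
    · rw [Function.comp_apply, hLexp w hw hw0, dslope_cexp_of_ne hw0]
  have hF : AnalyticOnNhd ℂ F (Metric.ball 0 (2 * Real.pi)) := fun w hw => by
    have := dslope_cexp_ne_zero (mem_ball_zero_iff.1 hw)
    have := differentiable_dslope_cexp.analyticAt w
    fun_prop (disch := assumption)
  have hFL : formalTaylorSeries (F * L) = bernoulliEGF ℂ x * formalTaylorSeries L := by
    rw [formalTaylorSeries_mul (hF 0 (mem_of_mem_nhds hball)).contDiffAt hL.contDiffAt,
      formalTaylorSeries_cexp_mul_div_dslope]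
  have hsum : HasSum (fun n => coeff n (formalTaylorSeries (F * L)) * z ^ n) ((F * L) z) :=
    hasSum_coeff_formalTaylorSeries_mul_pow (hF.mul hLanal).differentiableOn
      (mem_ball_zero_iff.2 hz)
  simp only [hFL, coeff_bernoulliEGF_mul_eq_Acoef x
    (by rw [constantCoeff_formalTaylorSeries, hL0])
    (X_mul_derivative_formalTaylorSeries_of_cexp_comp_eq_dslope hL hLG)] at hsum
  have hFz : (F * L) z = z * Complex.exp (x * z) / (Complex.exp z - 1) * L z := by
    change Complex.exp (x * z) / dslope Complex.exp 0 z * L z = _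
    rw [dslope_cexp_of_ne (norm_pos_iff.1 hz0), div_div_eq_mul_div, mul_comm z]
  rw [← hasSum_nat_add_iff' 1, hFz] at hsum
  simpa [Acoef] using hsum
end
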